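/- Let u be holomorphic and not identically zero on a neighborhood of the closed disc D(0,R), with |u(z)| ≤ e^{φ(z)/h} on the circle |z| = R, where φ is continuous, h > 0. Suppose |u(z₀)| ≥ e^{(φ(z₀) − ε)/h} at some point z₀ with |z₀| ≤ R/4 and φ(z₀) ≥ max_{|z|=R} φ(z) − m for some m ≥ 0. Then the number of zeros of u in D(0, R/2), counted with multiplicity, is at most C(ε + m)/h for a universal constant C. -/

import Mathlib

open Metric

section JensenAux
open Finset

private lemma factor_out {U : Set ℂ} (hU : IsOpen U) {u : ℂ → ℂ}
    (hu : DifferentiableOn ℂ u U) (mlt : ℂ → ℕ) (Z : Finset ℂ)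
    (hZ : ∀ z ∈ Z, z ∈ U ∧ u z = 0 ∧ 1 ≤ mlt z ∧
        ∃ g : ℂ → ℂ, AnalyticAt ℂ g z ∧ ∀ᶠ w in nhds z, u w = (w - z) ^ (mlt z) * g w) :
    ∃ v : ℂ → ℂ, DifferentiableOn ℂ v U ∧
      ∀ w ∈ U, u w = (∏ z ∈ Z, (w - z) ^ (mlt z)) * v w := by
  classical
  revert hZ
  induction Z using Finset.induction_on with
  | empty => exact fun _ => ⟨u, hu, fun w _ => by simp⟩
  | @insert z Z hzZ IH =>
    intro hZ
    obtain ⟨v, hv, huv⟩ := IH (fun z' hz' => hZ z' (Finset.mem_insert_of_mem hz'))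
    obtain ⟨hzU, huz, hk, g, hg, hgev⟩ := hZ z (Finset.mem_insert_self z Z)
    set k := mlt z with hkdef
    set P : ℂ → ℂ := fun w => ∏ z' ∈ Z, (w - z') ^ (mlt z') with hPdef
    have hPdiff : Differentiable ℂ P := by
      apply Differentiable.fun_finsetProd
      intro i _
      exact (differentiable_id.sub_const i).pow _
    have hPz : P z ≠ 0 := by
      simp only [hPdef]
      rw [Finset.prod_ne_zero_iff]
      intro i hi
      exact pow_ne_zero _ (sub_ne_zero.2 (fun h => hzZ (h ▸ hi)))
    set v' : ℂ → ℂ := fun w => if w = z then g z / P z else v w / (w - z) ^ k with hv'def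
    have hUz : U ∈ nhds z := hU.mem_nhds hzU
    have hev : v' =ᶠ[nhds z] fun w => g w / P w := by
      filter_upwards [hgev, hUz, hPdiff.continuous.continuousAt.eventually_ne hPz] with
        w hw1 hw2 hw3
      by_cases hwz : w = z
      · subst hwz; simp [hv'def]
      · simp only [hv'def, if_neg hwz]
        have h1 : P w * v w = (w - z) ^ k * g w := by rw [← huv w hw2, hw1]
        rw [div_eq_div_iff (pow_ne_zero _ (sub_ne_zero.2 hwz)) hw3]
        linear_combination h1
    have hv'diff : DifferentiableOn ℂ v' U := by
      intro x hx
      by_cases hxz : x = z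
      · subst hxz
        have hd : DifferentiableAt ℂ (fun w => g w / P w) x :=
          (hg.differentiableAt).div (hPdiff x) hPz
        exact (hd.congr_of_eventuallyEq hev).differentiableWithinAt
      · have hev2 : v' =ᶠ[nhds x] fun w => v w / (w - z) ^ k := by
          filter_upwards [eventually_ne_nhds hxz] with w hw
          simp [hv'def, if_neg hw]
        have hd : DifferentiableAt ℂ (fun w => v w / (w - z) ^ k) x :=
          (hv.differentiableAt (hU.mem_nhds hx)).div
            (((differentiable_id.sub_const z).pow k) x)
            (pow_ne_zero _ (sub_ne_zero.2 hxz))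
        exact (hd.congr_of_eventuallyEq hev2).differentiableWithinAt
    refine ⟨v', hv'diff, fun w hw => ?_⟩
    rw [Finset.prod_insert hzZ]
    by_cases hwz : w = z
    · subst hwz
      rw [huz]
      have hzero : (w - w) ^ k = 0 := by
        simp [zero_pow (by omega : k ≠ 0)]
      rw [hzero]; ring
    · rw [huv w hw]
      simp only [hv'def, if_neg hwz]
      have hne : (w - z) ^ k ≠ 0 := pow_ne_zero _ (sub_ne_zero.2 hwz)
      field_simp
      ring

end JensenAux

theorem jensen_zero_counting :
    ∃ C : ℝ, 0 < C ∧
      ∀ (R h ε m : ℝ) (φ : ℂ → ℝ) (u : ℂ → ℂ) (z₀ : ℂ),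
        0 < R → 0 < h → 0 ≤ ε → 0 ≤ m →
        -- u is holomorphic on a neighborhood of the closed disc
        (∃ U : Set ℂ, IsOpen U ∧ closedBall (0 : ℂ) R ⊆ U ∧
            DifferentiableOn ℂ u U) →
        -- u is not identically zero
        (∃ z ∈ closedBall (0 : ℂ) R, u z ≠ 0) →
        ContinuousOn φ (sphere (0 : ℂ) R) →
        (∀ z ∈ sphere (0 : ℂ) R, ‖u z‖ ≤ Real.exp (φ z / h)) →
        ‖z₀‖ ≤ R / 4 →
        Real.exp ((φ z₀ - ε) / h) ≤ ‖u z₀‖ →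
        (∀ z ∈ sphere (0 : ℂ) R, φ z ≤ φ z₀ + m) →
        -- any finite set of zeros in D(0, R/2), counted with multiplicities
        ∀ (Z : Finset ℂ) (mlt : ℂ → ℕ),
          (∀ z ∈ Z, z ∈ ball (0 : ℂ) (R / 2) ∧ u z = 0 ∧ 1 ≤ mlt z ∧
            ∃ g : ℂ → ℂ, AnalyticAt ℂ g z ∧
              ∀ᶠ w in nhds z, u w = (w - z) ^ (mlt z) * g w) →
          (∑ z ∈ Z, (mlt z : ℝ)) ≤ C * (ε + m) / h := by
  refine ⟨(Real.log (7/6))⁻¹, inv_pos.2 (Real.log_pos (by norm_num)), ?_⟩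
  intro R h ε m φ u z₀ hR hh hε hm hexU _hnz _hφcont hub hz₀ hlb hφm Z mlt hZ
  obtain ⟨U, hUopen, hUsub, hudiff⟩ := hexU
  have hZ' : ∀ z ∈ Z, z ∈ U ∧ u z = 0 ∧ 1 ≤ mlt z ∧
      ∃ g : ℂ → ℂ, AnalyticAt ℂ g z ∧
        ∀ᶠ w in nhds z, u w = (w - z) ^ (mlt z) * g w := by
    intro z hz
    obtain ⟨h1, h2, h3, h4⟩ := hZ z hz
    exact ⟨hUsub ((ball_subset_closedBall.trans
      (closedBall_subset_closedBall (by linarith))) h1), h2, h3, h4⟩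
  obtain ⟨v, hvdiff, huv⟩ := factor_out hUopen hudiff mlt Z hZ'
  set N := ∑ z ∈ Z, mlt z with hN
  set F : ℂ → ℂ := fun w => v w * ∏ z ∈ Z, ((R:ℂ)^2 - (starRingEnd ℂ) z * w)^(mlt z) with hF
  -- key modulus identity on the sphere
  have key : ∀ w : ℂ, ‖w‖ = R → ∀ z : ℂ,
      ‖(R:ℂ)^2 - (starRingEnd ℂ) z * w‖ = R * ‖w - z‖ := by
    intro w hw z
    have h2 : w * (starRingEnd ℂ) w = ((R:ℝ)^2 : ℂ) := by
      rw [Complex.mul_conj, Complex.normSq_eq_norm_sq, hw]; push_cast; ring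
    have h1 : (R:ℂ)^2 - (starRingEnd ℂ) z * w
        = (starRingEnd ℂ) ((starRingEnd ℂ) w * (w - z)) := by
      rw [map_mul, Complex.conj_conj, map_sub, mul_sub, h2]
      push_cast; ring
    rw [h1, Complex.norm_conj, norm_mul, Complex.norm_conj, hw]
  -- upper bound for |F| on the sphere
  have hFub : ∀ w ∈ sphere (0:ℂ) R,
      ‖F w‖ ≤ R^N * Real.exp ((φ z₀ + m)/h) := by
    intro w hw
    have hwR : ‖w‖ = R := by simpa using hw
    have hwU : w ∈ U := hUsub (sphere_subset_closedBall hw)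
    have h3 : ‖F w‖ = R^N * ‖u w‖ := by
      rw [huv w hwU]
      simp only [hF, norm_mul, norm_prod, norm_pow]
      rw [Finset.prod_congr rfl (fun z _ => by rw [key w hwR z])]
      simp_rw [mul_pow]
      rw [Finset.prod_mul_distrib, Finset.prod_pow_eq_pow_sum]
      ring
    rw [h3]
    have h4 := hub w hw
    have h5 := hφm w hw
    have h6 : Real.exp (φ w / h) ≤ Real.exp ((φ z₀ + m)/h) :=
      Real.exp_le_exp.2 (by gcongr)
    have hRN : (0:ℝ) ≤ R^N := by positivity
    exact mul_le_mul_of_nonneg_left (h4.trans h6) hRN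
  -- maximum modulus principle
  have hz₀ball : z₀ ∈ closedBall (0:ℂ) R := by
    rw [mem_closedBall_zero_iff]
    calc ‖z₀‖ = ‖z₀‖ := rfl
      _ ≤ R/4 := hz₀
      _ ≤ R := by linarith
  have hz₀U : z₀ ∈ U := hUsub hz₀ball
  have hFdiff : DifferentiableOn ℂ F (closedBall (0:ℂ) R) := by
    apply DifferentiableOn.mul (hvdiff.mono hUsub)
    apply Differentiable.differentiableOn
    apply Differentiable.fun_finsetProd
    intro i _
    exact ((differentiable_const _).sub ((differentiable_const _).mul differentiable_id)).pow _
  have hmax : ‖F z₀‖ ≤ R^N * Real.exp ((φ z₀ + m)/h) := by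
    have hd : DiffContOnCl ℂ F (ball (0:ℂ) R) := by
      apply DifferentiableOn.diffContOnCl
      rwa [closure_ball (0:ℂ) hR.ne']
    have := Complex.norm_le_of_forall_mem_frontier_norm_le isBounded_ball hd
      (C := R^N * Real.exp ((φ z₀ + m)/h)) ?_ (z := z₀) ?_
    · exact this
    · intro w hw
      rw [frontier_ball (0:ℂ) hR.ne'] at hw
      exact hFub w hw
    · rwa [closure_ball (0:ℂ) hR.ne']
  -- lower bound for |F z₀|
  have hu0 : ‖u z₀‖
      = ‖v z₀‖ * ∏ z ∈ Z, ‖z₀ - z‖ ^ (mlt z) := by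
    rw [huv z₀ hz₀U]
    simp only [norm_mul, norm_prod, norm_pow]
    ring
  have hprod_ub : ∏ z ∈ Z, ‖z₀ - z‖ ^ (mlt z) ≤ (3*R/4)^N := by
    rw [hN, ← Finset.prod_pow_eq_pow_sum]
    apply Finset.prod_le_prod (fun i _ => by positivity)
    intro i hi
    apply pow_le_pow_left₀ (norm_nonneg _)
    have h7 : ‖i‖ < R/2 := by
      have := (hZ i hi).1
      rwa [mem_ball_zero_iff] at this
    calc ‖z₀ - i‖ ≤ ‖z₀‖ + ‖i‖ := by
          simpa using norm_sub_le z₀ i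
      _ ≤ 3*R/4 := by linarith
  have hprod_lb : (7*R^2/8)^N
      ≤ ∏ z ∈ Z, ‖(R:ℂ)^2 - (starRingEnd ℂ) z * z₀‖ ^ (mlt z) := by
    rw [hN, ← Finset.prod_pow_eq_pow_sum]
    apply Finset.prod_le_prod (fun i _ => by positivity)
    intro i hi
    apply pow_le_pow_left₀ (by positivity)
    have h7 : ‖i‖ < R/2 := by
      have := (hZ i hi).1
      rwa [mem_ball_zero_iff] at this
    have h8 : R^2 - ‖i‖ * ‖z₀‖
        ≤ ‖(R:ℂ)^2 - (starRingEnd ℂ) i * z₀‖ := by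
      have h8' := norm_sub_norm_le ((R:ℂ)^2) ((starRingEnd ℂ) i * z₀)
      simp only [Real.norm_eq_abs, norm_pow, norm_mul, Complex.norm_conj,
        Complex.norm_real] at h8'
      rwa [abs_of_pos hR] at h8'
    have h10 : ‖i‖ * ‖z₀‖ ≤ R/2 * (R/4) :=
      mul_le_mul h7.le hz₀ (norm_nonneg _) (by linarith)
    nlinarith
  have hvpos : 0 < ‖v z₀‖ := by
    rcases (norm_nonneg (v z₀)).eq_or_lt with h7 | h7
    · exfalso
      have := (Real.exp_pos ((φ z₀ - ε)/h)).trans_le hlb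
      rw [hu0, ← h7] at this
      simp at this
    · exact h7
  have hFlb : (7*R/6)^N * Real.exp ((φ z₀ - ε)/h) ≤ ‖F z₀‖ := by
    have hF0 : ‖F z₀‖
        = ‖v z₀‖ * ∏ z ∈ Z, ‖(R:ℂ)^2 - (starRingEnd ℂ) z * z₀‖ ^ (mlt z) := by
      simp only [hF, norm_mul, norm_prod, norm_pow]
    have h5 : Real.exp ((φ z₀ - ε)/h) ≤ ‖v z₀‖ * (3*R/4)^N :=
      hlb.trans (by rw [hu0]; exact mul_le_mul_of_nonneg_left hprod_ub (norm_nonneg _))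
    have h6 : ‖v z₀‖ * (7*R^2/8)^N ≤ ‖F z₀‖ := by
      rw [hF0]
      exact mul_le_mul_of_nonneg_left hprod_lb (norm_nonneg _)
    calc (7*R/6)^N * Real.exp ((φ z₀ - ε)/h)
        ≤ (7*R/6)^N * (‖v z₀‖ * (3*R/4)^N) :=
          mul_le_mul_of_nonneg_left h5 (by positivity)
      _ = ‖v z₀‖ * ((7*R/6) * (3*R/4))^N := by rw [mul_pow]; ring
      _ = ‖v z₀‖ * (7*R^2/8)^N := by
          rw [show (7*R/6) * (3*R/4) = 7*R^2/8 from by ring]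
      _ ≤ ‖F z₀‖ := h6
  -- combine
  have hmain : (7*R/6)^N * Real.exp ((φ z₀ - ε)/h) ≤ R^N * Real.exp ((φ z₀ + m)/h) :=
    hFlb.trans hmax
  have hsplit : (7*R/6)^N = R^N * (7/6:ℝ)^N := by
    rw [← mul_pow]; ring_nf
  rw [hsplit, mul_assoc] at hmain
  have hRNpos : (0:ℝ) < R^N := by positivity
  have h8 : (7/6:ℝ)^N * Real.exp ((φ z₀ - ε)/h) ≤ Real.exp ((φ z₀ + m)/h) :=
    le_of_mul_le_mul_left hmain hRNpos
  have h10 : (7/6:ℝ)^N ≤ Real.exp ((ε+m)/h) := by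
    have hdiv : Real.exp ((φ z₀ + m)/h) / Real.exp ((φ z₀ - ε)/h) = Real.exp ((ε+m)/h) := by
      rw [← Real.exp_sub]
      congr 1
      field_simp
      ring
    rw [← hdiv, le_div_iff₀ (Real.exp_pos _)]
    exact h8
  have h11 : (N:ℝ) * Real.log (7/6) ≤ (ε+m)/h := by
    have h12 := Real.log_le_log (by positivity) h10
    rwa [Real.log_pow, Real.log_exp] at h12
  have hlog : 0 < Real.log (7/6:ℝ) := Real.log_pos (by norm_num)
  have hsum : (∑ z ∈ Z, (mlt z : ℝ)) = (N:ℝ) := by rw [hN]; push_cast; ring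
  rw [hsum]
  have heq : (Real.log (7/6:ℝ))⁻¹ * (ε + m) / h = ((ε+m)/h) / Real.log (7/6) := by
    rw [inv_mul_eq_div, div_div, div_div, mul_comm]
  rw [heq, le_div_iff₀ hlog]
  exact h11
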